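/- arXiv:2011.09319 — 2 statements merged into one kernel-verified Lean document; each statement's English description precedes it below -/
import Mathlib

section
/- The bidual E'' = (⊕_{n=1}^∞ ℓ_2^n)_{ℓ_∞} does not have the weak Dunford–Pettis property. -/
open Filter Topology

noncomputable section

/-- The `n`-th block: the Euclidean lattice `ℓ₂^(n+1)` (so `n` ranges over all positive
dimensions). -/
abbrev Blk (n : ℕ) := EuclideanSpace ℝ (Fin (n + 1))

/-- Sequences of blocks; the ambient product in which `E`, `E'` and `E''` live. -/
abbrev PreE := ∀ n, Blk n

/-- The coordinatewise (lattice) order. -/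
def ele (x y : PreE) : Prop := ∀ n i, x n i ≤ y n i

/-- Membership in `E = (⊕ ℓ₂ⁿ)_{c₀}`: block norms tend to zero. -/
def memE0 (x : PreE) : Prop := Tendsto (fun n => ‖x n‖) atTop (𝓝 0)

/-- Membership in `E' = (⊕ ℓ₂ⁿ)_{ℓ₁}`: block norms are summable. -/
def memE1 (x : PreE) : Prop := Summable fun n => ‖x n‖

/-- The duality pairing `⟨f, x⟩ = Σₙ Σᵢ f n i * x n i`. -/
def pairE (f x : PreE) : ℝ := ∑' n, ∑ i, f n i * x n i

/-- `E'' = (⊕ ℓ₂ⁿ)_{ℓ_∞}`, the ℓ∞-sum, as a genuine Banach space. -/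
abbrev Epp := ↥(lp Blk ⊤)

/-- The diagonal unit vectors: `dg n` is `1` in the last coordinate of block `n`, `0` elsewhere. -/
def dg (n : ℕ) : PreE := fun m => if m = n then EuclideanSpace.single (Fin.last m) 1 else 0

/-- A set in a normed space is relatively weakly compact if its weak closure is compact. -/
def RelWeaklyCompact {Y : Type*} [NormedAddCommGroup Y] [NormedSpace ℝ Y] (A : Set Y) : Prop :=
  IsCompact (closure (toWeakSpace ℝ Y '' A))

/-- A sequence in a normed space is weakly null if it tends to `0` in the weak topology. -/
def WeaklyNullSeq {F : Type*} [NormedAddCommGroup F] [NormedSpace ℝ F] (x : ℕ → F) : Prop :=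
  Tendsto (fun n => toWeakSpace ℝ F (x n)) atTop (𝓝 0)

/-- The weak Dunford–Pettis property of a normed lattice `F` whose disjointness relation is
`disj`: weakly compact operators map disjoint weakly null sequences to norm null sequences. -/
def HasWDPw (F : Type) [NormedAddCommGroup F] [NormedSpace ℝ F] (disj : F → F → Prop) : Prop :=
  ∀ (Y : Type) [NormedAddCommGroup Y] [NormedSpace ℝ Y] [CompleteSpace Y],
    ∀ S : F →L[ℝ] Y, RelWeaklyCompact (S '' Metric.closedBall 0 1) →
      ∀ x : ℕ → F, (Pairwise fun n m => disj (x n) (x m)) → WeaklyNullSeq x →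
        Tendsto (fun n => ‖S (x n)‖) atTop (𝓝 0)

/-!
`ℓ₂` sits in `E''` as a complemented sublattice: `R' c = (c₀, …, cₙ)ₙ` embeds it, and reading
the blocks as vectors of `ℓ₂` and taking coordinatewise limits along an ultrafilter gives a left
inverse `P` of norm at most one. `P` is weakly compact because its target is a Hilbert space, and
the images `R' eₖ` of the unit vectors are pairwise disjoint and weakly null, yet `P (R' eₖ) = eₖ`
has norm one.
-/

open Metric
open scoped ENNReal

section WeakTopology

variable {F G : Type*} [NormedAddCommGroup F] [NormedSpace ℝ F]
  [NormedAddCommGroup G] [NormedSpace ℝ G]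

theorem weaklyNullSeq_iff {x : ℕ → F} :
    WeaklyNullSeq x ↔ ∀ φ : StrongDual ℝ F, Tendsto (fun k => φ (x k)) atTop (𝓝 0) := by
  rw [WeaklyNullSeq, (NormedSpace.isEmbedding_inclusionInDoubleDualWeak ℝ F).tendsto_nhds_iff,
    tendsto_iff_forall_eval_tendsto_topDualPairing, map_zero]
  rfl

theorem WeaklyNullSeq.map {x : ℕ → F} (hx : WeaklyNullSeq x) (T : F →L[ℝ] G) :
    WeaklyNullSeq fun k => T (x k) := by
  have := ((WeakSpace.map T).continuous.tendsto 0).comp hx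
  rwa [map_zero] at this

end WeakTopology

section Hilbert

variable {H : Type*} [NormedAddCommGroup H] [InnerProductSpace ℝ H] [CompleteSpace H]

theorem Orthonormal.weaklyNullSeq {e : ℕ → H} (he : Orthonormal ℝ e) : WeaklyNullSeq e := by
  refine weaklyNullSeq_iff.2 fun φ => ?_
  obtain ⟨y, rfl⟩ := (InnerProductSpace.toDual ℝ H).surjective φ
  have h := (Real.continuous_sqrt.tendsto 0).comp
    (he.inner_products_summable (x := y)).tendsto_atTop_zero
  simp only [Function.comp_def, Real.norm_eq_abs, sq_abs, Real.sqrt_sq_eq_abs, Real.sqrt_zero] at h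
  simpa [real_inner_comm] using (tendsto_zero_iff_abs_tendsto_zero _).2 h

theorem inclusionInDoubleDual_surjective :
    Function.Surjective (NormedSpace.inclusionInDoubleDual ℝ H) := by
  intro Φ
  let td := InnerProductSpace.toDual ℝ H
  refine ⟨td.symm (Φ.comp td.toContinuousLinearEquiv.toContinuousLinearMap), ?_⟩
  ext f
  obtain ⟨y, rfl⟩ := td.surjective f
  simp only [NormedSpace.dual_def, td, InnerProductSpace.toDual_apply_apply]
  rw [real_inner_comm, InnerProductSpace.toDual_symm_apply]
  rfl

theorem relWeaklyCompact_of_isBounded {A : Set H} (hA : Bornology.IsBounded A) :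
    RelWeaklyCompact A := by
  refine NormedSpace.isCompact_closure_of_isBounded ℝ H _ ?_ ?_
  · simpa [Set.preimage_image_eq _ (toWeakSpace ℝ H).injective] using hA
  · rintro Φ -
    exact inclusionInDoubleDual_surjective Φ

end Hilbert

theorem not_hasWDPw_of_orthonormal_retract {F H : Type} [NormedAddCommGroup F] [NormedSpace ℝ F]
    [NormedAddCommGroup H] [InnerProductSpace ℝ H] [CompleteSpace H] {disj : F → F → Prop}
    (J : H →L[ℝ] F) (P : F →L[ℝ] H) (hPJ : ∀ h, P (J h) = h) {e : ℕ → H}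
    (he : Orthonormal ℝ e) (hdisj : Pairwise fun k m => disj (J (e k)) (J (e m))) :
    ¬ HasWDPw F disj := by
  intro hF
  have hP : RelWeaklyCompact (P '' closedBall 0 1) :=
    relWeaklyCompact_of_isBounded (P.lipschitz.isBounded_image isBounded_closedBall)
  have h := hF H P hP _ hdisj (he.weaklyNullSeq.map J)
  simp only [hPJ, he.norm_eq_one] at h
  exact one_ne_zero (tendsto_nhds_unique tendsto_const_nhds h)

section EuclideanInL2

variable {ι α : Type*} [Fintype ι] (g : ι ↪ α)

theorem hasSum_sq_extend_zero (y : EuclideanSpace ℝ ι) :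
    HasSum (fun a => ‖Function.extend g y 0 a‖ ^ 2) (‖y‖ ^ 2) := by
  have h : (fun a => ‖Function.extend g y 0 a‖ ^ 2) =
      Function.extend g (fun i => ‖y i‖ ^ 2) 0 := by
    funext a
    rw [Function.apply_extend (fun t : ℝ => ‖t‖ ^ 2)]
    simp only [Function.comp_def, Pi.zero_apply, norm_zero, zero_pow two_ne_zero]
    rfl
  rw [h, hasSum_extend_zero g.injective, EuclideanSpace.norm_sq_eq]
  exact hasSum_fintype _

theorem memℓp_extend_zero (y : EuclideanSpace ℝ ι) : Memℓp (Function.extend g y 0) 2 :=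
  memℓp_gen <| by simpa using (hasSum_sq_extend_zero g y).summable

def extendL2 : EuclideanSpace ℝ ι →ₗᵢ[ℝ] lp (fun _ : α => ℝ) 2 where
  toFun y := ⟨Function.extend g y 0, memℓp_extend_zero g y⟩
  map_add' y z := lp.ext <| map_add (Function.ExtendByZero.linearMap ℝ g) y.ofLp z.ofLp
  map_smul' c y := lp.ext <| map_smul (Function.ExtendByZero.linearMap ℝ g) c y.ofLp
  norm_map' y := by
    have h := lp.hasSum_norm (p := 2) (by norm_num) ⟨_, memℓp_extend_zero g y⟩
    simp only [ENNReal.toReal_ofNat, Real.rpow_two] at h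
    exact (pow_left_inj₀ (norm_nonneg _) (norm_nonneg _) two_ne_zero).1 <|
      h.unique (hasSum_sq_extend_zero g y)

@[simp]
theorem extendL2_apply_apply (y : EuclideanSpace ℝ ι) (i : ι) : extendL2 g y (g i) = y i :=
  g.injective.extend_apply _ _ _

def restrictL2 : lp (fun _ : α => ℝ) 2 →L[ℝ] EuclideanSpace ℝ ι :=
  LinearMap.mkContinuous
    { toFun c := WithLp.toLp 2 fun i => c (g i)
      map_add' c d := by ext; simp
      map_smul' r c := by ext; simp }
    1 fun c => by
      have h := lp.sum_rpow_le_norm_rpow (p := 2) (by norm_num) c (Finset.univ.map g)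
      simp only [ENNReal.toReal_ofNat, Real.rpow_two, Finset.sum_map] at h
      rw [one_mul, EuclideanSpace.norm_eq, Real.sqrt_le_left (norm_nonneg c)]
      simpa using h

theorem norm_restrictL2_apply_le (c : lp (fun _ : α => ℝ) 2) : ‖restrictL2 g c‖ ≤ ‖c‖ :=
  ((restrictL2 g).le_of_opNorm_le (LinearMap.mkContinuous_norm_le _ zero_le_one _) c).trans_eq
    (one_mul _)

end EuclideanInL2

section Ultralimit

variable {ι α : Type*} {E : α → Type*} [∀ a, NormedAddCommGroup (E a)] [∀ a, ProperSpace (E a)]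
  {p : ℝ≥0∞} [Fact (1 ≤ p)]

theorem tendsto_limUnder_coe_of_norm_le (U : Ultrafilter ι) {F : ι → lp E p} {C : ℝ}
    (hF : ∀ k, ‖F k‖ ≤ C) :
    Tendsto (fun k => (F k : ∀ a, E a)) U (𝓝 (limUnder U fun k => (F k : ∀ a, E a))) := by
  refine tendsto_nhds_limUnder ?_
  have hp : p ≠ 0 := (zero_lt_one.trans_le Fact.out).ne'
  choose f hf using fun a => (isCompact_closedBall (0 : E a) C).ultrafilter_le_nhds
    (U.map fun k => F k a) <|
      le_principal_iff.2 <| Ultrafilter.mem_map.2 <| univ_mem' fun k =>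
        mem_closedBall_zero_iff.2 <| (lp.norm_apply_le_norm hp (F k) a).trans (hF k)
  exact ⟨f, tendsto_pi_nhds.2 fun a => (hf a).2⟩

variable {X : Type*} [NormedAddCommGroup X] [NormedSpace ℝ X] [∀ a, NormedSpace ℝ (E a)]

def ultralimCLM (U : Ultrafilter ι) (T : ι → X →L[ℝ] lp E p) {C : ℝ}
    (hT : ∀ k x, ‖T k x‖ ≤ C * ‖x‖) : X →L[ℝ] lp E p :=
  have h x := tendsto_limUnder_coe_of_norm_le U (hT · x)
  LinearMap.mkContinuous
    { toFun x := ⟨_, lp.memℓp_of_tendsto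
        (isBounded_iff_forall_norm_le.2 ⟨C * ‖x‖, Set.forall_mem_range.2 (hT · x)⟩) (h x)⟩
      map_add' x y := lp.ext <| tendsto_nhds_unique (h (x + y)) <| by
        simp only [map_add, lp.coeFn_add]
        exact (h x).add (h y)
      map_smul' c x := lp.ext <| tendsto_nhds_unique (h (c • x)) <| by
        simpa using (h x).const_smul c }
    C fun x => lp.norm_le_of_tendsto (Eventually.of_forall (hT · x)) (h x)

theorem ultralimCLM_apply_eq {U : Ultrafilter ι} {T : ι → X →L[ℝ] lp E p} {C : ℝ}
    {hT : ∀ k x, ‖T k x‖ ≤ C * ‖x‖} {x : X} {f : lp E p}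
    (hf : Tendsto (fun k => (T k x : ∀ a, E a)) U (𝓝 f)) : ultralimCLM U T hT x = f :=
  lp.ext <| tendsto_nhds_unique (tendsto_limUnder_coe_of_norm_le U (hT · x)) hf

end Ultralimit

theorem orthonormal_lp_single : Orthonormal ℝ fun k : ℕ => lp.single 2 k (1 : ℝ) := by
  rw [orthonormal_iff_ite]
  intro i j
  simp [lp.inner_single_left, lp.single_apply, Pi.single_apply]

/-- The adjoint `R'` of the Stegall map `R : E' → ℓ₂`. -/
def l2ToEpp : lp (fun _ : ℕ => ℝ) 2 →L[ℝ] Epp :=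
  LinearMap.mkContinuous
    { toFun c := ⟨fun n => restrictL2 Fin.valEmbedding c, memℓp_infty ⟨‖c‖, by
        rintro - ⟨n, rfl⟩
        exact norm_restrictL2_apply_le _ c⟩⟩
      map_add' c d := lp.ext <| funext fun n => map_add (restrictL2 _) c d
      map_smul' r c := lp.ext <| funext fun n => map_smul (restrictL2 _) r c }
    1 fun c => by
      rw [one_mul]
      exact lp.norm_le_of_forall_le (norm_nonneg c) fun n => norm_restrictL2_apply_le _ c

theorem l2ToEpp_apply (c : lp (fun _ : ℕ => ℝ) 2) (n : ℕ) (j : Fin (n + 1)) :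
    (l2ToEpp c : PreE) n j = c j := rfl

def eppToL2 : Epp →L[ℝ] lp (fun _ : ℕ => ℝ) 2 :=
  ultralimCLM (Ultrafilter.of atTop)
    (fun n => (extendL2 Fin.valEmbedding).toContinuousLinearMap ∘L lp.evalCLM ℝ Blk ⊤ n)
    (C := 1) fun n x => by
      rw [one_mul]
      exact ((extendL2 _).norm_map _).trans_le (lp.norm_apply_le_norm ENNReal.top_ne_zero x n)

theorem eppToL2_l2ToEpp (c : lp (fun _ : ℕ => ℝ) 2) : eppToL2 (l2ToEpp c) = c := by
  refine ultralimCLM_apply_eq <| Tendsto.mono_left ?_ (Ultrafilter.of_le atTop)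
  refine tendsto_pi_nhds.2 fun i => tendsto_const_nhds.congr' ?_
  filter_upwards [eventually_ge_atTop i] with n hn
  exact (extendL2_apply_apply Fin.valEmbedding ((l2ToEpp c : PreE) n) ⟨i, by omega⟩).symm

theorem l2ToEpp_single_disjoint : Pairwise fun k m =>
    ∀ n i, min |(l2ToEpp (lp.single 2 k 1) : PreE) n i|
      |(l2ToEpp (lp.single 2 m 1) : PreE) n i| = 0 := by
  intro k m hkm n i
  simp only [l2ToEpp_apply, lp.single_apply, Pi.single_apply]
  split_ifs <;> simp_all

/-- The bidual `E'' = (⊕ ℓ₂ⁿ)_{ℓ∞}` (with its coordinatewise lattice disjointness) does not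
have the weak Dunford–Pettis property. -/
theorem stmt_5 :
    ¬ HasWDPw Epp (fun a b => ∀ n i, min |(a : PreE) n i| |(b : PreE) n i| = 0) :=
  not_hasWDPw_of_orthonormal_retract l2ToEpp eppToL2 eppToL2_l2ToEpp orthonormal_lp_single
    l2ToEpp_single_disjoint
end
end

section
/- The Banach lattice E = (⊕_{n=1}^∞ ℓ_2^n)_{c_0} does not have the positive Grothendieck property: the sequence of coordinate functionals (e'_{n,n}) in E' is positive and weak* null but not weakly null. -/
open Filter Topology

noncomputable section

/- The pairing of `dg k` with anything reads off the diagonal coordinate `(k, last)`. Against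
`x ∈ E` that coordinate is bounded by the block norm `‖x k‖ → 0`; but the bounded element of
`E''` that is `1` on every diagonal coordinate pairs with every `dg k` to `1`. -/

lemma pairE_comm (f x : PreE) : pairE f x = pairE x f := by
  simp only [pairE, mul_comm]

lemma dg_apply_of_ne {k n : ℕ} (h : n ≠ k) : dg k n = 0 := if_neg h

lemma dg_self (k : ℕ) : dg k k = EuclideanSpace.single (Fin.last k) 1 := if_pos rfl

lemma pairE_dg (k : ℕ) (x : PreE) : pairE (dg k) x = x k (Fin.last k) := by
  rw [pairE, tsum_eq_single k fun n hn => by simp [dg_apply_of_ne hn], dg_self]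
  simp [PiLp.single_apply]

lemma dg_nonneg (k : ℕ) : ele 0 (dg k) := by
  intro n i
  rcases eq_or_ne n k with rfl | h
  · rw [dg_self, PiLp.single_apply]
    split_ifs <;> simp
  · simp [dg_apply_of_ne h]

lemma memE1_dg (k : ℕ) : memE1 (dg k) :=
  (hasSum_single k fun n hn => by simp [dg_apply_of_ne hn]).summable

lemma tendsto_pairE_dg_of_memE0 {x : PreE} (hx : memE0 x) :
    Tendsto (fun k => pairE (dg k) x) atTop (𝓝 0) := by
  simp only [pairE_dg]
  exact squeeze_zero_norm (fun k => PiLp.norm_apply_le (x k) (Fin.last k)) hx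

def diagOne : PreE := fun n => EuclideanSpace.single (Fin.last n) 1

lemma norm_diagOne (n : ℕ) : ‖diagOne n‖ = 1 := by
  simp [diagOne, PiLp.norm_single]

lemma pairE_diagOne_dg (k : ℕ) : pairE diagOne (dg k) = 1 := by
  simp [pairE_comm diagOne, pairE_dg, diagOne]

/-- `E = (⊕ ℓ₂ⁿ)_{c₀}` fails the positive Grothendieck property: the diagonal coordinate
functionals `(dg k)` in `E'` are positive and weak* null (i.e. null against every `x ∈ E`)
but not weakly null (i.e. not null against every element of `E'' = (⊕ ℓ₂ⁿ)_{ℓ∞}`). -/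
theorem stmt_7 :
    (∀ k, ele 0 (dg k)) ∧ (∀ k, memE1 (dg k)) ∧
    (∀ x : PreE, memE0 x → Tendsto (fun k => pairE (dg k) x) atTop (𝓝 0)) ∧
    ¬ (∀ F : PreE, (∃ C, ∀ n, ‖F n‖ ≤ C) →
        Tendsto (fun k => pairE F (dg k)) atTop (𝓝 0)) := by
  refine ⟨dg_nonneg, memE1_dg, fun x hx => tendsto_pairE_dg_of_memE0 hx, fun h => ?_⟩
  have hlim := h diagOne ⟨1, fun n => (norm_diagOne n).le⟩
  simp only [pairE_diagOne_dg] at hlim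
  exact one_ne_zero (tendsto_nhds_unique tendsto_const_nhds hlim)
end
end
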